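/- Let M_OOD be a real symmetric positive semidefinite d×d matrix with eigenvalues λ_1 ≥ … ≥ λ_d, let 1 ≤ r < d, and suppose γ_OOD := λ_r(M_OOD) − λ_{r+1}(M_OOD) > 0. Let Π_OOD be the orthogonal projector onto the span of eigenvectors of M_OOD corresponding to its r largest eigenvalues, and define the loss L(Π) := tr[(I − Π)·M_OOD] for any d×d matrix Π. Let Π_ID be any d×d rank-r orthogonal projection matrix, and suppose the GAE projector satisfies Π_GAE = Π_OOD (i.e., the estimated OOD subspace equals the true one). Then L(Π_GAE) ≤ L(Π_ID) − (γ_OOD/2)·‖Π_OOD − Π_ID‖_F². -/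

import Mathlib

/-!
In the eigenbasis `u` of `M`, an orthogonal projection `P` of rank `r` has diagonal weights
`p i = uᵢ ⬝ P uᵢ ∈ [0, 1]` summing to `r`, and `tr (P M) = ∑ λᵢ pᵢ`, while the top-`r`
eigenprojector `Q` has weights `1` on the first `r` indices and `0` elsewhere. Hence the loss gap
`tr (Q M) - tr (P M)` moves the mass `∑_{i<r} (1 - pᵢ) = ∑_{i≥r} pᵢ` from eigenvalues `≥ λ_{r-1}`
to eigenvalues `≤ λ_r`, so it is at least `(λ_{r-1} - λ_r) ∑_{i<r} (1 - pᵢ)`, and this sum is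
`‖Q - P‖_F² / 2` because `tr (Q Q) = tr (P P) = r` and `tr (Q P) = ∑_{i<r} pᵢ`.
-/

open Matrix BigOperators

/-- Frobenius norm of a real matrix. -/
noncomputable def frobNorm {m n : ℕ} (A : Matrix (Fin m) (Fin n) ℝ) : ℝ :=
  Real.sqrt (∑ i, ∑ j, (A i j) ^ 2)

namespace Matrix

theorem trace_eq_rank_of_isIdempotentElem {K n : Type*} [Field K] [Fintype n] [DecidableEq n]
    {A : Matrix n n K} (hA : IsIdempotentElem A) : A.trace = A.rank := by
  have hlin : IsIdempotentElem (toLin' A) := hA.map toLinAlgEquiv'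
  rw [← trace_toLin'_eq, (LinearMap.IsIdempotentElem.isProj_range _ hlin).trace, rank]
  rfl

variable {ι : Type*} [Fintype ι]

theorem posSemidef_of_isSymm_of_isIdempotentElem {P : Matrix ι ι ℝ} (hs : P.IsSymm)
    (hi : IsIdempotentElem P) : P.PosSemidef := by
  have h : P = Pᴴ * P := by rw [conjTranspose_eq_transpose_of_trivial, hs.eq, hi.eq]
  rw [h]
  exact posSemidef_conjTranspose_mul_self P

theorem dotProduct_mulVec_mem_Icc_of_isSymm_of_isIdempotentElem [DecidableEq ι]
    {P : Matrix ι ι ℝ} (hs : P.IsSymm) (hi : IsIdempotentElem P) {v : ι → ℝ}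
    (hv : v ⬝ᵥ v = 1) : v ⬝ᵥ P *ᵥ v ∈ Set.Icc 0 1 := by
  have hPv := (posSemidef_of_isSymm_of_isIdempotentElem hs hi).dotProduct_mulVec_nonneg v
  have hQv := (posSemidef_of_isSymm_of_isIdempotentElem (P := 1 - P)
    (by simp [IsSymm, hs.eq]) hi.one_sub).dotProduct_mulVec_nonneg v
  simp only [star_trivial, sub_mulVec, one_mulVec, dotProduct_sub, hv] at hPv hQv
  exact ⟨hPv, by linarith⟩

theorem trace_transpose_mul_sub_of_isSymm {R : Type*} [CommRing R] {P Q : Matrix ι ι R}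
    (hP : P.IsSymm) (hQ : Q.IsSymm) :
    trace ((Q - P)ᵀ * (Q - P)) = trace (Q * Q) + trace (P * P) - 2 * trace (Q * P) := by
  rw [transpose_sub, hP.eq, hQ.eq, sub_mul, mul_sub, mul_sub, trace_sub, trace_sub, trace_sub,
    trace_mul_comm P Q]
  ring

end Matrix

theorem frobNorm_sq {m n : ℕ} (A : Matrix (Fin m) (Fin n) ℝ) :
    frobNorm A ^ 2 = trace (Aᵀ * A) := by
  rw [frobNorm, Real.sq_sqrt (by positivity), Finset.sum_comm]
  simp only [trace, diag_apply, mul_apply, transpose_apply, sq]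

def spanProjection {ι : Type*} (u : ι → ι → ℝ) (S : Finset ι) : Matrix ι ι ℝ :=
  ∑ i ∈ S, vecMulVec (u i) (u i)

theorem isSymm_spanProjection {ι : Type*} (u : ι → ι → ℝ) (S : Finset ι) :
    (spanProjection u S).IsSymm := by
  simp [spanProjection, IsSymm, transpose_sum, transpose_vecMulVec]

section OrthonormalFamily

variable {ι : Type*} [Fintype ι] [DecidableEq ι] {u : ι → ι → ℝ}

theorem trace_eq_sum_dotProduct_mulVec (hu : ∀ i j, u i ⬝ᵥ u j = if i = j then 1 else 0)
    (A : Matrix ι ι ℝ) :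
    A.trace = ∑ i, u i ⬝ᵥ A *ᵥ u i := by
  set U : Matrix ι ι ℝ := of u
  have hU : U * Uᵀ = 1 := by
    ext i j
    simpa [U, mul_apply, one_apply, dotProduct] using hu i j
  calc A.trace = (U * A * Uᵀ).trace := by
        rw [trace_mul_comm, ← Matrix.mul_assoc, mul_eq_one_comm.mp hU, one_mul]
    _ = ∑ i, u i ⬝ᵥ A *ᵥ u i := by
        simp only [trace, diag_apply, mul_apply, transpose_apply, dotProduct, mulVec, U, of_apply,
          Finset.sum_mul, Finset.mul_sum]
        refine Finset.sum_congr rfl fun i _ => ?_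
        rw [Finset.sum_comm]
        simp only [mul_assoc]

theorem spanProjection_mulVec (hu : ∀ i j, u i ⬝ᵥ u j = if i = j then 1 else 0)
    (S : Finset ι) (j : ι) :
    spanProjection u S *ᵥ u j = if j ∈ S then u j else 0 := by
  simp [spanProjection, sum_mulVec, vecMulVec_mulVec, hu]

theorem trace_spanProjection_mul (hu : ∀ i j, u i ⬝ᵥ u j = if i = j then 1 else 0)
    (S : Finset ι) (A : Matrix ι ι ℝ) :
    trace (spanProjection u S * A) = ∑ i ∈ S, u i ⬝ᵥ A *ᵥ u i := by
  rw [trace_mul_comm, trace_eq_sum_dotProduct_mulVec hu]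
  simp_rw [← mulVec_mulVec, spanProjection_mulVec hu, apply_ite, mulVec_zero, dotProduct_zero,
    Finset.sum_ite_mem, Finset.univ_inter]

theorem trace_mul_eq_sum_mul_dotProduct_mulVec
    (hu : ∀ i j, u i ⬝ᵥ u j = if i = j then 1 else 0)
    {M : Matrix ι ι ℝ} {lam : ι → ℝ} (heig : ∀ i, M *ᵥ u i = lam i • u i) (A : Matrix ι ι ℝ) :
    trace (A * M) = ∑ i, lam i * (u i ⬝ᵥ A *ᵥ u i) := by
  simp_rw [trace_eq_sum_dotProduct_mulVec hu, ← mulVec_mulVec, heig, mulVec_smul,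
    dotProduct_smul, smul_eq_mul]

theorem trace_spanProjection_mul_eq_sum
    (hu : ∀ i j, u i ⬝ᵥ u j = if i = j then 1 else 0)
    {M : Matrix ι ι ℝ} {lam : ι → ℝ} (heig : ∀ i, M *ᵥ u i = lam i • u i) (S : Finset ι) :
    trace (spanProjection u S * M) = ∑ i ∈ S, lam i := by
  simp [trace_spanProjection_mul hu, heig, hu]

theorem trace_transpose_mul_spanProjection_sub
    (hu : ∀ i j, u i ⬝ᵥ u j = if i = j then 1 else 0)
    (S : Finset ι) {P : Matrix ι ι ℝ} (hs : P.IsSymm) (hi : IsIdempotentElem P)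
    (hrank : P.rank = S.card) :
    trace ((spanProjection u S - P)ᵀ * (spanProjection u S - P)) =
      2 * ∑ i ∈ S, (1 - u i ⬝ᵥ P *ᵥ u i) := by
  have hQQ : trace (spanProjection u S * spanProjection u S) = S.card := by
    rw [trace_spanProjection_mul hu, Finset.sum_congr rfl fun i hi => by
      rw [spanProjection_mulVec hu, if_pos hi, hu, if_pos rfl]]
    simp
  have hPP : trace (P * P) = S.card := by rw [hi.eq, trace_eq_rank_of_isIdempotentElem hi, hrank]
  rw [trace_transpose_mul_sub_of_isSymm hs (isSymm_spanProjection u S), hQQ, hPP,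
    trace_spanProjection_mul hu, Finset.sum_sub_distrib]
  simp
  ring

end OrthonormalFamily

theorem mul_sum_one_sub_le_sum_sub_sum_mul {ι : Type*} [Fintype ι] [DecidableEq ι]
    (S : Finset ι) {lam p : ι → ℝ} {a b : ℝ}
    (ha : ∀ i ∈ S, a ≤ lam i) (hb : ∀ i ∉ S, lam i ≤ b) (hp : ∀ i, p i ∈ Set.Icc 0 1)
    (hsum : ∑ i, p i = S.card) :
    (a - b) * ∑ i ∈ S, (1 - p i) ≤ ∑ i ∈ S, lam i - ∑ i, lam i * p i := by
  have hbal : ∑ i ∈ Sᶜ, p i = ∑ i ∈ S, (1 - p i) := by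
    rw [Finset.sum_sub_distrib, Finset.sum_const, nsmul_one, ← hsum,
      ← Finset.sum_compl_add_sum S p]
    ring
  have hin : a * ∑ i ∈ S, (1 - p i) ≤ ∑ i ∈ S, lam i - ∑ i ∈ S, lam i * p i := by
    rw [← Finset.sum_sub_distrib, Finset.mul_sum]
    exact Finset.sum_le_sum fun i hi => by nlinarith [ha i hi, (hp i).2]
  have hout : ∑ i ∈ Sᶜ, lam i * p i ≤ b * ∑ i ∈ Sᶜ, p i := by
    rw [Finset.mul_sum]
    exact Finset.sum_le_sum fun i hi =>
      mul_le_mul_of_nonneg_right (hb i (Finset.mem_compl.mp hi)) (hp i).1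
  have hsplit : ∑ i, lam i * p i = ∑ i ∈ Sᶜ, lam i * p i + ∑ i ∈ S, lam i * p i :=
    (Finset.sum_compl_add_sum S _).symm
  rw [hbal] at hout
  linarith

/-- **Theorem 1 (Improvement over ID Explainer).**
Let `M_OOD` be real symmetric PSD with eigenvalues `lam` in nonincreasing order along an
orthonormal eigenbasis `u`, `1 ≤ r < d`, positive eigengap
`γ_OOD = λ_r(M_OOD) − λ_{r+1}(M_OOD)`, and `P_OOD` the top-`r` eigenprojector. If `P_ID` is any
rank-`r` orthogonal projection matrix and the GAE projector satisfies `P_GAE = P_OOD`, then with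
`L(P) = tr[(I − P)·M_OOD]` we have
`L(P_GAE) ≤ L(P_ID) − (γ_OOD/2)·‖P_OOD − P_ID‖_F²`. -/
theorem gae_improvement_over_id_explainer
    {d r : ℕ} (hrd : r < d)
    (M_OOD : Matrix (Fin d) (Fin d) ℝ)
    (lam : Fin d → ℝ) (hlam : Antitone lam)
    (u : Fin d → Fin d → ℝ)
    (hu : ∀ i j, u i ⬝ᵥ u j = if i = j then (1 : ℝ) else 0)
    (heig : ∀ i, M_OOD.mulVec (u i) = lam i • u i)
    (P_OOD : Matrix (Fin d) (Fin d) ℝ)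
    (hPOOD : P_OOD = ∑ i ∈ Finset.univ.filter (fun i : Fin d => (i : ℕ) < r),
      vecMulVec (u i) (u i))
    (P_ID : Matrix (Fin d) (Fin d) ℝ)
    (hPIDsymm : P_ID.IsSymm) (hPIDidem : P_ID * P_ID = P_ID) (hPIDrank : P_ID.rank = r)
    (P_GAE : Matrix (Fin d) (Fin d) ℝ) (hGAE : P_GAE = P_OOD) :
    Matrix.trace ((1 - P_GAE) * M_OOD) ≤
      Matrix.trace ((1 - P_ID) * M_OOD) -
        ((lam ⟨r - 1, by omega⟩ - lam ⟨r, hrd⟩) / 2) * frobNorm (P_OOD - P_ID) ^ 2 := by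
  set S := Finset.univ.filter (fun i : Fin d => (i : ℕ) < r)
  have hmem : ∀ i, i ∈ S ↔ (i : ℕ) < r := by simp [S]
  have hS : S.card = r := by simp [S, Fin.card_filter_val_lt, hrd.le]
  have hrank : P_ID.rank = S.card := hS ▸ hPIDrank
  have hsum : ∑ i, u i ⬝ᵥ P_ID *ᵥ u i = S.card := by
    rw [← trace_eq_sum_dotProduct_mulVec hu, trace_eq_rank_of_isIdempotentElem hPIDidem, hrank]
  have hhead : ∀ i ∈ S, lam ⟨r - 1, by omega⟩ ≤ lam i := fun i hi =>
    hlam (show (i : ℕ) ≤ r - 1 by have := (hmem i).mp hi; omega)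
  have htail : ∀ i ∉ S, lam i ≤ lam ⟨r, hrd⟩ := fun i hi =>
    hlam (show r ≤ (i : ℕ) by have := (hmem i).not.mp hi; omega)
  have hweights : ∀ i, u i ⬝ᵥ P_ID *ᵥ u i ∈ Set.Icc 0 1 := fun i =>
    dotProduct_mulVec_mem_Icc_of_isSymm_of_isIdempotentElem hPIDsymm hPIDidem (by simp [hu])
  have hkey := mul_sum_one_sub_le_sum_sub_sum_mul S hhead htail hweights hsum
  rw [hGAE, sub_mul, sub_mul, one_mul, trace_sub, trace_sub, frobNorm_sq, hPOOD,
    ← spanProjection, trace_spanProjection_mul_eq_sum hu heig,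
    trace_mul_eq_sum_mul_dotProduct_mulVec hu heig,
    trace_transpose_mul_spanProjection_sub hu S hPIDsymm hPIDidem hrank]
  linarith
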